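/- arXiv:2510.06485 — 3 statements merged into one kernel-verified Lean document; each statement's English description precedes it below -/
import Mathlib

section
/- Let s ≥ 2, let T = {x ∈ ℤ : x ≥ 2, s ∤ x}, and for x ∈ T let n(x) be the unique natural number with s^{n(x)−1} < x < s^{n(x)}, and set 1_{(x)} = 1_{(n(x),x)}. Then the functions {1_{(x)}}_{x∈T} are ℤ-linearly independent: if a finitely supported family of integers (f_x)_{x∈T} satisfies ∑_{x∈T} f_x · 1_{(x)} = 0 as a function on ℤ_s, then f_x = 0 for all x ∈ T. -/
open scoped Classical

instance (m : ℕ) : TopologicalSpace (ZMod m) := ⊥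

/-- The ring of `s`-adic integers, realized as the projective limit of `ZMod (s^n)`. -/
def ZSsub (s : ℕ) : Subring (∀ n : ℕ, ZMod (s ^ n)) where
  carrier := {f | ∀ n, ZMod.castHom (pow_dvd_pow s n.le_succ) (ZMod (s ^ n)) (f (n + 1)) = f n}
  mul_mem' := by intro a b ha hb n; simp only [Pi.mul_apply, map_mul]; rw [ha n, hb n]
  one_mem' := by intro n; simp only [Pi.one_apply]; exact map_one _
  add_mem' := by intro a b ha hb n; simp only [Pi.add_apply, map_add]; rw [ha n, hb n]
  zero_mem' := by intro n; simp only [Pi.zero_apply]; exact map_zero _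
  neg_mem' := by intro a ha n; simp only [Pi.neg_apply, map_neg]; rw [ha n]

abbrev ZS (s : ℕ) : Type := ZSsub s

/-- The characteristic function `1_{(n,x)}` of `{z : s^n ∣ z - x}` in `ℤ_s`. -/
noncomputable def ZS.indicator (s n : ℕ) (x : ℤ) (z : ZS s) : ℤ :=
  if ((s : ZS s)) ^ n ∣ (z - (x : ZS s)) then 1 else 0

/-! Evaluating a vanishing combination at `x₀ = min (supp f)` kills every other term: for
`x > x₀` one has `0 < x - x₀ ≤ x < s ^ n(x)`, so `x₀ ∉ x + s ^ n(x) ℤ_s`. Hence `f x₀ = 0`. -/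

namespace ZS

theorem pow_dvd_intCast_iff (s n : ℕ) (a : ℤ) :
    (s : ZS s) ^ n ∣ (a : ZS s) ↔ (s : ℤ) ^ n ∣ a := by
  constructor
  · rintro ⟨u, hu⟩
    -- the `n`-th coordinate of `s ^ n * u` vanishes in `ZMod (s ^ n)`
    have h := congrArg (fun w : ZS s => (w : ∀ m, ZMod (s ^ m)) n) hu
    simp only [SubringClass.coe_intCast, MulMemClass.coe_mul, SubringClass.coe_natCast,
      Pi.intCast_apply, Pi.mul_apply, Pi.natCast_apply, ← Nat.cast_pow, ZMod.natCast_self,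
      zero_mul] at h
    exact_mod_cast (ZMod.intCast_zmod_eq_zero_iff_dvd a (s ^ n)).mp h
  · rintro ⟨b, rfl⟩
    exact ⟨b, by push_cast; ring⟩

theorem indicator_intCast (s n : ℕ) (x y : ℤ) :
    indicator s n x y = if (s : ℤ) ^ n ∣ y - x then 1 else 0 := by
  simp only [indicator, ← Int.cast_sub, pow_dvd_intCast_iff]

theorem indicator_intCast_self (s n : ℕ) (x : ℤ) : indicator s n x x = 1 := by
  simp [indicator_intCast]

theorem indicator_intCast_eq_zero_of_lt {s n : ℕ} {x y : ℤ} (hyx : y < x)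
    (hlt : x - y < (s : ℤ) ^ n) : indicator s n x y = 0 := by
  rw [indicator_intCast, if_neg]
  intro hdvd
  have := Int.le_of_dvd (by omega) (dvd_neg.mpr hdvd)
  omega

theorem indicator_log_natCast_eq_zero_of_lt {s : ℕ} (hs : 1 < s) {x y : ℕ} (hyx : y < x) :
    indicator s (Nat.log s x + 1) x ((y : ℤ) : ZS s) = 0 := by
  have hx : (x : ℤ) < (s : ℤ) ^ (Nat.log s x + 1) := by
    exact_mod_cast Nat.lt_pow_succ_log_self hs x
  exact indicator_intCast_eq_zero_of_lt (n := Nat.log s x + 1) (by omega) (by omega)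

end ZS

theorem stmt5_general (s : ℕ) (hs : 2 ≤ s) (f : ℕ →₀ ℤ)
    (hsum : ∀ z : ZS s,
      ∑ x ∈ f.support, f x * ZS.indicator s (Nat.log s x + 1) (x : ℤ) z = 0) :
    f = 0 := by
  by_contra hf
  have hne : f.support.Nonempty := Finsupp.support_nonempty_iff.mpr hf
  set x₀ := f.support.min' hne
  have hx₀ : x₀ ∈ f.support := f.support.min'_mem hne
  have hval := hsum ((x₀ : ℤ) : ZS s)
  rw [Finset.sum_eq_single x₀ (fun x hx hx₀x => ?_) (absurd hx₀),
    ZS.indicator_intCast_self, mul_one] at hval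
  · exact Finsupp.mem_support_iff.mp hx₀ hval
  · have hlt : x₀ < x := lt_of_le_of_ne (f.support.min'_le x hx) (Ne.symm hx₀x)
    rw [ZS.indicator_log_natCast_eq_zero_of_lt hs hlt, mul_zero]

/-- For `x ≥ 2` with `s ∤ x`, `n(x) = Nat.log s x + 1` is the unique `n` with
`s^(n-1) < x < s^n`, and `1_{(x)} = 1_{(n(x),x)}`. The family `{1_{(x)}}_{x ∈ T}`,
`T = {x ≥ 2 : s ∤ x}`, is ℤ-linearly independent. -/
theorem stmt5 (s : ℕ) (hs : 2 ≤ s) (f : ℕ →₀ ℤ)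
    (hT : ∀ x ∈ f.support, 2 ≤ x ∧ ¬ s ∣ x)
    (hsum : ∀ z : ZS s,
      ∑ x ∈ f.support, f x * ZS.indicator s (Nat.log s x + 1) (x : ℤ) z = 0) :
    f = 0 :=
  stmt5_general s hs f hsum
end

section
/- Let s ≥ 2 and T = {x ∈ ℤ : x ≥ 2, s ∤ x}. Every locally constant function f : ℤ_s^× → ℤ vanishing at 1 (i.e., every continuous ℤ-valued function on ℤ_s^× with f(1) = 0) is a finite ℤ-linear combination of the functions 1_{(x)} for x ∈ T. -/
open scoped Classical

/-! A continuous `ℤ`-valued function on the compact space `ℤ_s^×` is locally constant with a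
uniform level: it factors through reduction modulo `s^N` for some `N`. On residues `r < s^N` the
functions `1_{(x)}` with `x ∈ T`, `x < s^N`, form a unitriangular system (`1_{(x)}(x) = 1`, and
`1_{(x)}(r) = 0` for `r < x` because `x < s^{n(x)}`), so the coefficients can be solved for one
residue at a time in increasing order. The residue `1` needs no coefficient since `f(1) = 0`. -/

instance (m : ℕ) : DiscreteTopology (ZMod m) := ⟨rfl⟩

open Filter Topology

theorem exists_finsupp_sum_eq_of_unitriangular {R : Type*} [Ring R] (E : ℕ → ℕ → R)
    (hE_self : ∀ x, E x x = 1) (hE_lt : ∀ {x r}, r < x → E x r = 0) (P : ℕ → Prop)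
    (F : ℕ → R) (M : ℕ) :
    ∃ g : ℕ →₀ R, (∀ x ∈ g.support, P x ∧ x < M) ∧
      ∀ r < M, P r → F r = g.sum fun x c => c * E x r := by
  induction M with
  | zero => exact ⟨0, by simp, by simp⟩
  | succ M ih =>
    obtain ⟨g, hg, hgF⟩ := ih
    by_cases hM : P M
    · set c := F M - g.sum fun x c => c * E x M
      have hsum (r : ℕ) : (g + Finsupp.single M c).sum (fun x c => c * E x r)
          = (g.sum fun x c => c * E x r) + c * E M r := by
        rw [Finsupp.sum_add_index' (by simp) (by simp [add_mul]),
          Finsupp.sum_single_index (zero_mul _)]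
      refine ⟨g + Finsupp.single M c, fun x hx => ?_, fun r hr hPr => ?_⟩
      · rcases Finset.mem_union.1 (Finsupp.support_add hx) with hx | hx
        · exact ⟨(hg x hx).1, Nat.lt_succ_of_lt (hg x hx).2⟩
        · rw [Finset.mem_singleton.1 (Finsupp.support_single_subset hx)]
          exact ⟨hM, M.lt_succ_self⟩
      · rw [hsum]
        rcases (Nat.lt_succ_iff.1 hr).lt_or_eq with hr | rfl
        · rw [hE_lt hr, mul_zero, add_zero, hgF r hr hPr]
        · rw [hE_self, mul_one, add_sub_cancel]
    · refine ⟨g, fun x hx => ⟨(hg x hx).1, Nat.lt_succ_of_lt (hg x hx).2⟩,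
        fun r hr hPr => hgF r ?_ hPr⟩
      exact (Nat.lt_succ_iff.1 hr).lt_of_ne (by rintro rfl; exact hM hPr)

namespace ZS

variable {s : ℕ}

@[simp]
theorem coe_natCast (k n : ℕ) : (k : ZS s).1 n = k := by
  rw [SubringClass.coe_natCast]; rfl

@[simp]
theorem coe_intCast (k : ℤ) (n : ℕ) : (k : ZS s).1 n = k := by
  rw [SubringClass.coe_intCast]; rfl

theorem castHom_coord (z : ZS s) {n m : ℕ} (h : n ≤ m) :
    ZMod.castHom (pow_dvd_pow s h) (ZMod (s ^ n)) (z.1 m) = z.1 n := by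
  induction m, h using Nat.le_induction with
  | base => simp [ZMod.castHom_self]
  | succ m hnm ih =>
    rw [← ih, ← z.2 m, ← RingHom.comp_apply, ZMod.castHom_comp]

theorem coord_eq_of_le {z w : ZS s} {n m : ℕ} (h : n ≤ m) (hzw : z.1 m = w.1 m) :
    z.1 n = w.1 n := by
  rw [← castHom_coord z h, ← castHom_coord w h, hzw]

theorem indicator_natCast_self (n x : ℕ) : ZS.indicator s n x (x : ZS s) = 1 := by
  simp [ZS.indicator]

section NeZero

variable [NeZero s]

theorem natCast_val_coord (z : ZS s) {n m : ℕ} (h : n ≤ m) :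
    ((z.1 m).val : ZMod (s ^ n)) = z.1 n := by
  rw [ZMod.natCast_val, ← ZMod.castHom_apply (h := pow_dvd_pow s h), castHom_coord z h]

theorem val_coord_mod (z : ZS s) {n m : ℕ} (h : n ≤ m) :
    (z.1 m).val % s ^ n = (z.1 n).val := by
  rw [← ZMod.val_natCast, natCast_val_coord z h]

theorem exists_natCast_coord_eq (z : ZS s) (N : ℕ) :
    ∃ r < s ^ N, (r : ZS s).1 N = z.1 N :=
  ⟨(z.1 N).val, ZMod.val_lt _, by rw [coe_natCast, ZMod.natCast_zmod_val]⟩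

theorem pow_dvd_iff_coord_eq_zero (w : ZS s) (n : ℕ) : (s : ZS s) ^ n ∣ w ↔ w.1 n = 0 := by
  constructor
  · rintro ⟨q, rfl⟩
    show (s : ZS s).1 n ^ n * q.1 n = 0
    rw [coe_natCast, ← Nat.cast_pow, ZMod.natCast_self, zero_mul]
  · intro hw
    have hdvd : ∀ m, s ^ n ∣ (w.1 (m + n)).val := fun m =>
      Nat.dvd_of_mod_eq_zero (by rw [val_coord_mod w (by omega), hw, ZMod.val_zero])
    -- the quotient `w / s ^ n` has coordinates `⌊w_{m+n} / s ^ n⌋ mod s ^ m`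
    refine ⟨⟨fun m => ((w.1 (m + n)).val / s ^ n : ℕ), fun m => ?_⟩,
      Subtype.ext (funext fun m => ?_)⟩
    · have hmod : (w.1 (m + 1 + n)).val % (s ^ n * s ^ m) = (w.1 (m + n)).val := by
        rw [← pow_add, add_comm n m, val_coord_mod w (by omega)]
      show ZMod.castHom _ _ (((w.1 (m + 1 + n)).val / s ^ n : ℕ) : ZMod (s ^ (m + 1))) = _
      rw [map_natCast]
      dsimp only
      rw [← hmod, Nat.mod_mul_right_div_self, ZMod.natCast_mod]
    · show w.1 m = (s : ZS s).1 m ^ n * (((w.1 (m + n)).val / s ^ n : ℕ) : ZMod (s ^ m))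
      rw [coe_natCast, ← Nat.cast_pow, ← Nat.cast_mul, Nat.mul_div_cancel' (hdvd m),
        natCast_val_coord w (by omega)]

theorem dvd_iff_coord_one_eq_zero (w : ZS s) : (s : ZS s) ∣ w ↔ w.1 1 = 0 := by
  rw [← pow_dvd_iff_coord_eq_zero, pow_one]

theorem indicator_eq_of_coord_eq {n N : ℕ} (x : ℤ) {z w : ZS s} (h : n ≤ N)
    (hzw : z.1 N = w.1 N) : ZS.indicator s n x z = ZS.indicator s n x w := by
  simp only [ZS.indicator, pow_dvd_iff_coord_eq_zero]
  show (if z.1 n - (x : ZS s).1 n = 0 then (1 : ℤ) else 0) =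
    if w.1 n - (x : ZS s).1 n = 0 then 1 else 0
  rw [coord_eq_of_le h hzw]

theorem indicator_natCast_eq_zero {n x r : ℕ} (hx : x < s ^ n) (hr : r < x) :
    ZS.indicator s n x (r : ZS s) = 0 := by
  rw [ZS.indicator, if_neg]
  rw [pow_dvd_iff_coord_eq_zero]
  show (r : ZS s).1 n - ((x : ℤ) : ZS s).1 n ≠ 0
  rw [coe_natCast, coe_intCast, Int.cast_natCast, sub_ne_zero, Ne,
    ZMod.natCast_eq_natCast_iff', Nat.mod_eq_of_lt (hr.trans hx), Nat.mod_eq_of_lt hx]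
  exact hr.ne

end NeZero

theorem continuous_coord (n : ℕ) : Continuous fun z : ZS s => z.1 n :=
  (continuous_apply n).comp continuous_subtype_val

theorem hasBasis_nhds (z : ZS s) :
    (𝓝 z).HasBasis (fun _ => True) fun N => {w : ZS s | w.1 N = z.1 N} := by
  have hpi : (𝓝 z.1).HasBasis Set.Finite fun I => {g | ∀ i ∈ I, g i = z.1 i} := by
    simp only [nhds_pi, nhds_discrete]
    exact hasBasis_pi_pure _
  rw [nhds_induced]
  refine (hpi.comap Subtype.val).to_hasBasis (fun I hI => ?_)
    fun N _ => ⟨{N}, Set.finite_singleton N, fun w hw => hw N rfl⟩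
  obtain ⟨N, hN⟩ := hI.bddAbove
  exact ⟨N, trivial, fun w hw i hi => coord_eq_of_le (hN hi) hw⟩

variable {p : ZS s → Prop} {X : Type*} [TopologicalSpace X] [DiscreteTopology X]
  {f : {z // p z} → X}

theorem exists_coord_eq_imp_eq (hf : Continuous f) (z : {z // p z}) :
    ∃ N, ∀ w : {z // p z}, w.1.1 N = z.1.1 N → f w = f z := by
  have hz : f ⁻¹' {f z} ∈ 𝓝 z := hf.continuousAt.preimage_mem_nhds (mem_nhds_discrete.2 rfl)
  rw [nhds_induced, ((hasBasis_nhds z.1).comap Subtype.val).mem_iff] at hz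
  obtain ⟨N, -, hN⟩ := hz
  exact ⟨N, fun w hw => hN hw⟩

theorem eventually_forall_coord_eq_imp_eq [CompactSpace {z // p z}] (hf : Continuous f) :
    ∀ᶠ N in atTop, ∀ z w : {z // p z}, w.1.1 N = z.1.1 N → f w = f z := by
  set U : ℕ → Set {z // p z} := fun N => {z | ∀ w, w.1.1 N = z.1.1 N → f w = f z}
  have hU_mono : Monotone U := fun N M hNM z hz w hw => hz w (coord_eq_of_le hNM hw)
  have hU_open (N : ℕ) : IsOpen (U N) := isOpen_iff_forall_mem_open.2 fun z hz =>
    ⟨{z' | z'.1.1 N = z.1.1 N}, fun z' hz' w hw => (hz w (hw.trans hz')).trans (hz z' hz').symm,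
      (isOpen_discrete {z.1.1 N}).preimage ((continuous_coord N).comp continuous_subtype_val),
      rfl⟩
  obtain ⟨N, hN⟩ := isCompact_univ.elim_directed_cover U hU_open
    (fun z _ => Set.mem_iUnion.2 (exists_coord_eq_imp_eq hf z)) hU_mono.directed_le
  exact eventually_atTop.2 ⟨N, fun M hM z => hU_mono hM (hN (Set.mem_univ z))⟩

theorem isClosed_carrier : IsClosed (ZSsub s : Set (∀ n, ZMod (s ^ n))) := by
  show IsClosed {f : ∀ n, ZMod (s ^ n) | ∀ n, _ = f n}
  simp only [Set.ofPred_forall]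
  exact isClosed_iInter fun n =>
    isClosed_eq (continuous_of_discreteTopology.comp (continuous_apply _)) (continuous_apply n)

variable [NeZero s]

instance : CompactSpace (ZS s) :=
  isCompact_iff_compactSpace.mp isClosed_carrier.isCompact

instance : CompactSpace {z : ZS s // ¬ (s : ZS s) ∣ z} := by
  have hcl : IsClosed {z : ZS s | ¬ (s : ZS s) ∣ z} := by
    simp only [dvd_iff_coord_one_eq_zero]
    exact (isClosed_discrete {0}ᶜ).preimage (continuous_coord 1)
  exact isCompact_iff_compactSpace.mp hcl.isCompact

end ZS

/-- Every continuous (equivalently locally constant) ℤ-valued function on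
`ℤ_s^× = {z : s ∤ z}` vanishing at `1` is a finite ℤ-linear combination of the
functions `1_{(x)}`, `x ∈ T = {x ≥ 2 : s ∤ x}`, where `1_{(x)} = 1_{(n(x),x)}`
with `n(x) = Nat.log s x + 1`. -/
theorem stmt6 (s : ℕ) (hs : 2 ≤ s)
    (f : {z : ZS s // ¬ (s : ZS s) ∣ z} → ℤ) (hf : Continuous f)
    (h1 : ¬ (s : ZS s) ∣ 1) (hf1 : f ⟨1, h1⟩ = 0) :
    ∃ g : ℕ →₀ ℤ, (∀ x ∈ g.support, 2 ≤ x ∧ ¬ s ∣ x) ∧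
      ∀ z : {z : ZS s // ¬ (s : ZS s) ∣ z},
        f z = ∑ x ∈ g.support, g x * ZS.indicator s (Nat.log s x + 1) (x : ℤ) z.1 := by
  have : NeZero s := ⟨by omega⟩
  obtain ⟨N, hN, hN1⟩ :=
    ((ZS.eventually_forall_coord_eq_imp_eq hf).and (eventually_ge_atTop 1)).exists
  let F (r : ℕ) : ℤ := if h : ¬ (s : ZS s) ∣ r then f ⟨r, h⟩ else 0
  obtain ⟨g, hg, hgF⟩ := exists_finsupp_sum_eq_of_unitriangular
    (fun x r => ZS.indicator s (Nat.log s x + 1) x (r : ZS s))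
    (fun x => ZS.indicator_natCast_self _ x)
    (ZS.indicator_natCast_eq_zero (Nat.lt_pow_succ_log_self hs _)) (fun x => 2 ≤ x ∧ ¬ s ∣ x)
    F (s ^ N)
  refine ⟨g, fun x hx => (hg x hx).1, fun z => ?_⟩
  obtain ⟨r, hrN, hrz⟩ := ZS.exists_natCast_coord_eq z.1 N
  have hr : ¬ (s : ZS s) ∣ r := by
    rw [ZS.dvd_iff_coord_one_eq_zero, ZS.coord_eq_of_le hN1 hrz, ← ZS.dvd_iff_coord_one_eq_zero]
    exact z.2
  have hrs : ¬ s ∣ r := fun hsr => hr (Nat.cast_dvd_cast hsr)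
  have hr0 : r ≠ 0 := by rintro rfl; exact hrs (dvd_zero s)
  calc f z = f ⟨r, hr⟩ := (hN z ⟨r, hr⟩ hrz).symm
    _ = ∑ x ∈ g.support, g x * ZS.indicator s (Nat.log s x + 1) x (r : ZS s) := by
      obtain rfl | hr2 : r = 1 ∨ 2 ≤ r := by omega
      · rw [show f ⟨((1 : ℕ) : ZS s), hr⟩ = f ⟨1, h1⟩ from congrArg f (Subtype.ext Nat.cast_one),
          hf1]
        exact (Finset.sum_eq_zero fun x hx => by
          rw [ZS.indicator_natCast_eq_zero (Nat.lt_pow_succ_log_self hs x) (hg x hx).1.1,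
            mul_zero]).symm
      · exact (dif_pos hr).symm.trans (hgF r hrN ⟨hr2, hrs⟩)
    _ = _ := Finset.sum_congr rfl fun x hx => by
      rw [ZS.indicator_eq_of_coord_eq _ (Nat.log_lt_of_lt_pow' (by omega) (hg x hx).2) hrz]
end

section
/- Let s ≥ 2 and z ∈ T = {x ≥ 2 : s ∤ x}. For every x ∈ T, the evaluation satisfies δ_z(1_{(x)}) = ∑_{i≥0, γ^i(z)∈T} e_{(γ^i(z))}(1_{(x)}), where e_{(y)}(1_{(x)}) = 1 if y = x and 0 otherwise; equivalently, 1_{(x)}(z) = 1 if and only if x = γ^i(z) for some i ≥ 0 with γ^i(z) ∈ T. -/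
open scoped Classical

/-- For `x ≥ 2` with `s^(n(x)-1) ≤ x < s^(n(x))` (so `n(x) - 1 = Nat.log s x`),
`γ(x) = x mod s^(n(x)-1)`. -/
def gam (s x : ℕ) : ℕ := x % s ^ (Nat.log s x)


/-- For `x ∈ T`, `n(x) = Nat.log s x + 1` and `1_{(x)}(z) = 1` iff `s^(n(x)) ∣ z - x`. -/
noncomputable def indZ (s x : ℕ) (z : ℕ) : ℤ :=
  if ((s : ℤ)) ^ (Nat.log s x + 1) ∣ ((z : ℤ) - (x : ℤ)) then 1 else 0

/-
Every iterate `γ^i(z)` is a residue `z mod s^m`: indeed `z = z mod s^(n(z))`, and `γ` only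
reduces a residue `z mod s^m` further modulo a smaller power of `s`. Conversely, a positive
residue `x = z mod s^m` satisfies `x < s^(n(x)) ≤ s^m`, so `x = z mod s^(n(x))`; and if
`x = z mod s^(n(x))`, then either `z < s^(n(x))`, so `z = x`, or `n(x) ≤ n(z) - 1` and
`γ(z) < z` has the same residue modulo `s^(n(x))`, so induction on `z` finds `x` in the orbit.
Finally `1_{(x)}(z) = 1` says precisely that `z mod s^(n(x)) = x`.
-/

section

variable {s : ℕ}

theorem mod_pow_log_succ_self (hs : 1 < s) (x : ℕ) : x % s ^ (Nat.log s x + 1) = x :=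
  Nat.mod_eq_of_lt (Nat.lt_pow_succ_log_self hs x)

theorem log_mod_pow_le (hs : 1 < s) (z m : ℕ) : Nat.log s (z % s ^ m) ≤ m := by
  rcases eq_or_ne (z % s ^ m) 0 with h | h
  · simp [h]
  · exact (Nat.log_lt_of_lt_pow h (Nat.mod_lt _ (by positivity))).le

theorem gam_lt (hs : 1 < s) {z : ℕ} (hz : z ≠ 0) : gam s z < z :=
  (Nat.mod_lt _ (by positivity)).trans_le (Nat.pow_log_le_self s hz)

theorem gam_mod_pow_of_le_log {n z : ℕ} (h : n ≤ Nat.log s z) : gam s z % s ^ n = z % s ^ n :=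
  Nat.mod_mod_of_dvd _ (pow_dvd_pow s h)

theorem exists_iterate_gam_eq_mod_pow (hs : 1 < s) (z i : ℕ) :
    ∃ m, (gam s)^[i] z = z % s ^ m := by
  induction i with
  | zero => exact ⟨_, (mod_pow_log_succ_self hs z).symm⟩
  | succ i ih =>
    obtain ⟨m, hm⟩ := ih
    exact ⟨_, by rw [Function.iterate_succ_apply', hm, gam,
      Nat.mod_mod_of_dvd _ (pow_dvd_pow s (log_mod_pow_le hs z m))]⟩

theorem mod_pow_log_succ_eq_of_mod_pow_eq (hs : 1 < s) {z x m : ℕ} (hx : x ≠ 0)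
    (h : z % s ^ m = x) : z % s ^ (Nat.log s x + 1) = x := by
  have hlt : Nat.log s x < m := Nat.log_lt_of_lt_pow hx (h ▸ Nat.mod_lt _ (by positivity))
  rw [← Nat.mod_mod_of_dvd z (pow_dvd_pow s hlt), h, mod_pow_log_succ_self hs]

theorem exists_iterate_gam_eq_of_mod_pow_log_succ (hs : 1 < s) {x : ℕ} (z : ℕ)
    (h : z % s ^ (Nat.log s x + 1) = x) : ∃ i, (gam s)^[i] z = x := by
  induction z using Nat.strong_induction_on with
  | _ z ih =>
    rcases lt_or_ge z (s ^ (Nat.log s x + 1)) with hlt | hle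
    · exact ⟨0, by rwa [Nat.mod_eq_of_lt hlt] at h⟩
    · have hz : z ≠ 0 := ((pow_pos (by omega) _).trans_le hle).ne'
      have hlog : Nat.log s x + 1 ≤ Nat.log s z := Nat.le_log_of_pow_le hs hle
      obtain ⟨i, hi⟩ := ih (gam s z) (gam_lt hs hz) (by rwa [gam_mod_pow_of_le_log hlog])
      exact ⟨i + 1, hi⟩

theorem exists_iterate_gam_eq_iff (hs : 1 < s) {z x : ℕ} (hx : x ≠ 0) :
    (∃ i, (gam s)^[i] z = x) ↔ z % s ^ (Nat.log s x + 1) = x := by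
  refine ⟨fun ⟨i, hi⟩ => ?_, exists_iterate_gam_eq_of_mod_pow_log_succ hs z⟩
  obtain ⟨m, hm⟩ := exists_iterate_gam_eq_mod_pow hs z i
  exact mod_pow_log_succ_eq_of_mod_pow_eq hs hx (hm ▸ hi)

theorem indZ_eq_one_iff (hs : 1 < s) (x z : ℕ) :
    indZ s x z = 1 ↔ z % s ^ (Nat.log s x + 1) = x := by
  have hdvd : indZ s x z = 1 ↔ ((s ^ (Nat.log s x + 1) : ℕ) : ℤ) ∣ (z : ℤ) - x := by
    unfold indZ; push_cast; split_ifs with h <;> simp [h]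
  rw [hdvd, ← Nat.modEq_iff_dvd, Nat.ModEq, mod_pow_log_succ_self hs, eq_comm]

end

theorem stmt11_general (s z x : ℕ) (hs : 2 ≤ s)
    (hx2 : 2 ≤ x) (hsx : ¬ s ∣ x) :
    indZ s x z = 1 ↔
      ∃ i : ℕ, (2 ≤ (gam s)^[i] z ∧ ¬ s ∣ (gam s)^[i] z) ∧ x = (gam s)^[i] z := by
  rw [indZ_eq_one_iff hs, ← exists_iterate_gam_eq_iff hs (by omega)]
  constructor
  · rintro ⟨i, rfl⟩
    exact ⟨i, ⟨hx2, hsx⟩, rfl⟩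
  · rintro ⟨i, -, rfl⟩
    exact ⟨i, rfl⟩

/-- For `z, x ∈ T`: `1_{(x)}(z) = 1` iff `x = γ^i(z)` for some `i ≥ 0` with
`γ^i(z) ∈ T`; i.e. `δ_z = ∑_i e_{(γ^i(z))}` on the generators `1_{(x)}`. -/
theorem stmt11 (s z x : ℕ) (hs : 2 ≤ s) (hz2 : 2 ≤ z) (hsz : ¬ s ∣ z)
    (hx2 : 2 ≤ x) (hsx : ¬ s ∣ x) :
    indZ s x z = 1 ↔
      ∃ i : ℕ, (2 ≤ (gam s)^[i] z ∧ ¬ s ∣ (gam s)^[i] z) ∧ x = (gam s)^[i] z :=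
  stmt11_general s z x hs hx2 hsx
end
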